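/- arXiv:2405.06937 — 2 statements merged into one kernel-verified Lean document; each statement's English description precedes it below -/
import Mathlib

section
/- Let g be a Schwartz function on ℝ and let f : ℝ → ℂ be continuously differentiable with f and f' bounded. Then for every (t, ξ, λ) ∈ ℝ³ the map t ↦ T_f^{(g)}(t, ξ, λ) is differentiable in t and ∂_t T_f^{(g)}(t, ξ, λ) = T_{f'}^{(g)}(t, ξ, λ). -/
/-!
Substituting `x = u + t` moves all dependence on `t` into the factor `f (u + t)`, leaving the
fixed integrable weight `conj (g u) · exp(-2πiξu - iπλu²)`. Differentiation under the integral
sign is then dominated by `sup ‖f'‖ · ‖g u‖`.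
-/

open MeasureTheory Real Complex Finset

noncomputable section

/-- The chirplet transform of `f` with window `g`. -/
def CT (f g : ℝ → ℂ) (t ξ lam : ℝ) : ℂ :=
  ∫ x : ℝ, f x * (starRingEnd ℂ) (g (x - t)) *
    Complex.exp (-(2 * (π : ℂ) * Complex.I * (ξ : ℂ) * ((x : ℂ) - (t : ℂ)))
      - Complex.I * (π : ℂ) * (lam : ℂ) * ((x : ℂ) - (t : ℂ)) ^ 2)

/-- The window `x ↦ x^n g x`. -/
def tw (n : ℕ) (g : ℝ → ℂ) : ℝ → ℂ := fun x => (x : ℂ) ^ n * g x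

/-- The chirplet transform as a function of the time variable. -/
def Tt (f g : ℝ → ℂ) (ξ lam : ℝ) : ℝ → ℂ := fun t => CT f g t ξ lam

open scoped ComplexConjugate

theorem hasDerivAt_integral_comp_add_mul {𝔸 : Type*} [NormedRing 𝔸] [NormedAlgebra ℝ 𝔸]
    [CompleteSpace 𝔸] {μ : Measure ℝ} {f k : ℝ → 𝔸} {C C' : ℝ} (hf : Differentiable ℝ f)
    (hfC : ∀ x, ‖f x‖ ≤ C) (hf'C : ∀ x, ‖deriv f x‖ ≤ C') (hk : Integrable k μ) (t : ℝ) :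
    HasDerivAt (fun s => ∫ u, f (u + s) * k u ∂μ) (∫ u, deriv f (u + t) * k u ∂μ) t := by
  have hf_shift (s : ℝ) : Continuous fun u => f (u + s) := hf.continuous.comp (by fun_prop)
  refine (hasDerivAt_integral_of_dominated_loc_of_deriv_le (F := fun s u => f (u + s) * k u)
    (F' := fun s u => deriv f (u + s) * k u) (bound := fun u => C' * ‖k u‖)
    (Metric.ball_mem_nhds t one_pos) ?_ ?_ ?_ ?_ (hk.norm.const_mul C') ?_).2
  · exact .of_forall fun s => (hf_shift s).aestronglyMeasurable.mul hk.aestronglyMeasurable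
  · exact hk.bdd_mul (hf_shift t).aestronglyMeasurable (.of_forall fun u => hfC _)
  · exact ((stronglyMeasurable_deriv f).comp_measurable
      (measurable_add_const t)).aestronglyMeasurable.mul hk.aestronglyMeasurable
  · exact .of_forall fun u s _ => (norm_mul_le _ _).trans
      (mul_le_mul_of_nonneg_right (hf'C _) (norm_nonneg _))
  · exact .of_forall fun u s _ =>
      ((hf (u + s)).hasDerivAt.comp_const_add u s).mul_const (k u)

def chirpKernel (ξ lam u : ℝ) : ℂ :=
  Complex.exp (-(2 * (π : ℂ) * Complex.I * (ξ : ℂ) * (u : ℂ))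
      - Complex.I * (π : ℂ) * (lam : ℂ) * (u : ℂ) ^ 2)

lemma norm_chirpKernel (ξ lam u : ℝ) : ‖chirpKernel ξ lam u‖ = 1 := by
  rw [chirpKernel, Complex.norm_exp, Real.exp_eq_one_iff]
  simp [pow_two]

lemma continuous_chirpKernel (ξ lam : ℝ) : Continuous (chirpKernel ξ lam) := by
  unfold chirpKernel; fun_prop

lemma integrable_conj_mul_chirpKernel {g : ℝ → ℂ} (hg : Integrable g) (ξ lam : ℝ) :
    Integrable fun u => conj (g u) * chirpKernel ξ lam u :=
  hg.norm.mono' ((Complex.continuous_conj.comp_aestronglyMeasurable hg.1).mul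
    (continuous_chirpKernel ξ lam).aestronglyMeasurable)
    (.of_forall fun u => by simp [norm_chirpKernel])

lemma CT_eq_integral_comp_add (f g : ℝ → ℂ) (t ξ lam : ℝ) :
    CT f g t ξ lam = ∫ u, f (u + t) * (conj (g u) * chirpKernel ξ lam u) := by
  rw [CT, ← integral_add_right_eq_self _ t]
  congr 1 with u
  rw [add_sub_cancel_right, chirpKernel, mul_assoc]
  push_cast
  ring_nf

theorem chirplet_deriv_eq_chirplet_of_deriv
    (g : SchwartzMap ℝ ℂ) (f : ℝ → ℂ) (hf : ContDiff ℝ 1 f)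
    (hfb : ∃ C : ℝ, ∀ x, ‖f x‖ ≤ C) (hdfb : ∃ C : ℝ, ∀ x, ‖deriv f x‖ ≤ C)
    (t ξ lam : ℝ) :
    HasDerivAt (fun s => CT f (⇑g) s ξ lam) (CT (deriv f) (⇑g) t ξ lam) t := by
  obtain ⟨C, hfC⟩ := hfb
  obtain ⟨C', hf'C⟩ := hdfb
  simp only [CT_eq_integral_comp_add]
  exact hasDerivAt_integral_comp_add_mul (hf.differentiable one_ne_zero) hfC hf'C
    (integrable_conj_mul_chirpKernel g.integrable ξ lam) t
end
end

section
/- Let g be a Schwartz function on ℝ, let θ₀, μ₀, ω₀ ∈ ℝ, let φ(x) = (θ₀/6)x³ + (μ₀/2)x² + ω₀x, and let f(x) = exp(2πi φ(x)). Then for all (t, ξ, λ) ∈ ℝ³: ∂_t T_f^{(g)}(t, ξ, λ) = 2πi [ φ'(t) · T_f^{(g)}(t, ξ, λ) + φ''(t) · T_f^{(tg)}(t, ξ, λ) + (φ'''(t)/2) · T_f^{(t²g)}(t, ξ, λ) ]. -/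
open MeasureTheory Real Complex Finset

noncomputable section

open ComplexConjugate SchwartzMap

/-!
Substituting `x = y + t` moves the time variable from the window into the signal, so that
`∂ₜ T_f^{(g)} = T_{f'}^{(g)}`; differentiating under the integral is justified because `f'` grows
at most polynomially while `g` decays rapidly. For `f = exp (2πiφ)` one has `f' = 2πi φ' f`, and
the exact Taylor expansion `φ'(x) = φ'(t) + φ''(t) (x - t) + φ'''(t)/2 (x - t)²` of the quadratic
`φ'` turns each factor `(x - t)ⁿ` into the window `tⁿ g`.
-/

theorem SchwartzMap.integrable_one_add_norm_pow_mul {D V : Type*} [NormedAddCommGroup D]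
    [NormedSpace ℝ D] [MeasurableSpace D] [BorelSpace D] [SecondCountableTopology D]
    [NormedAddCommGroup V] [NormedSpace ℝ V]
    (μ : Measure D) [μ.HasTemperateGrowth] (g : 𝓢(D, V)) (k : ℕ) :
    Integrable (fun x => (1 + ‖x‖) ^ k * ‖g x‖) μ := by
  have hexpand : (fun x => (1 + ‖x‖) ^ k * ‖g x‖) =
      fun x => ∑ i ∈ range (k + 1), (k.choose i : ℝ) * (‖x‖ ^ i * ‖g x‖) := by
    funext x
    rw [add_comm, add_pow, sum_mul]
    exact sum_congr rfl fun i _ => by ring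
  rw [hexpand]
  exact integrable_finsetSum _ fun i _ => (g.integrable_pow_mul μ i).const_mul _

lemma one_add_abs_add_le (y s : ℝ) : 1 + |y + s| ≤ (1 + |s|) * (1 + |y|) := by
  nlinarith [abs_add_le y s, abs_nonneg y, abs_nonneg s, mul_nonneg (abs_nonneg y) (abs_nonneg s)]

lemma abs_quadratic_le (a b c x : ℝ) :
    |a * x ^ 2 + b * x + c| ≤ (|a| + |b| + |c|) * (1 + |x|) ^ 2 := by
  have hx := abs_nonneg x
  calc |a * x ^ 2 + b * x + c| ≤ |a| * |x| ^ 2 + |b| * |x| + |c| := by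
        grw [abs_add_le, abs_add_le, abs_mul, abs_mul, abs_pow]
    _ ≤ (|a| + |b| + |c|) * (1 + |x|) ^ 2 := by
        nlinarith [abs_nonneg a, abs_nonneg b, abs_nonneg c, mul_nonneg (abs_nonneg a) hx,
          mul_nonneg (abs_nonneg b) hx, mul_nonneg (abs_nonneg b) (mul_nonneg hx hx),
          mul_nonneg (abs_nonneg c) hx, mul_nonneg (abs_nonneg c) (mul_nonneg hx hx)]

namespace Chirplet

def chirp (ξ lam y : ℝ) : ℂ := Complex.exp (-(2 * π * I * ξ * y) - I * π * lam * y ^ 2)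

lemma continuous_chirp (ξ lam : ℝ) : Continuous (chirp ξ lam) := by
  unfold chirp; fun_prop

lemma norm_mul_conj_mul_chirp (a b : ℂ) (ξ lam y : ℝ) :
    ‖a * conj b * chirp ξ lam y‖ = ‖a‖ * ‖b‖ := by
  simp [chirp, Complex.norm_exp, ← Complex.ofReal_pow]

lemma CT_eq_integral_shift (f h : ℝ → ℂ) (t ξ lam : ℝ) :
    CT f h t ξ lam = ∫ y, f (y + t) * conj (h y) * chirp ξ lam y := by
  rw [CT, ← integral_add_right_eq_self _ t]
  simp only [chirp, add_sub_cancel_right, ofReal_add]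

lemma integrable_shift_mul_conj_mul_chirp {u h : ℝ → ℂ} {C : ℝ} (hu : Continuous u)
    (hub : ∀ x, ‖u x‖ ≤ C) (hh : Integrable h) (t ξ lam : ℝ) :
    Integrable (fun y => u (y + t) * conj (h y) * chirp ξ lam y) := by
  refine (hh.norm.const_mul C).mono' ?_ (Filter.Eventually.of_forall fun y => ?_)
  · exact ((hu.comp (continuous_add_const t)).aestronglyMeasurable.mul
      (Complex.continuous_conj.comp_aestronglyMeasurable hh.1)).mul
      (continuous_chirp ξ lam).aestronglyMeasurable
  · rw [norm_mul_conj_mul_chirp]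
    exact mul_le_mul_of_nonneg_right (hub _) (norm_nonneg _)

lemma tw_zero (g : ℝ → ℂ) : tw 0 g = g := by
  funext x; simp [tw]

lemma integrable_tw (g : 𝓢(ℝ, ℂ)) (n : ℕ) : Integrable (tw n g) := by
  have hcont : Continuous (tw n g) := by unfold tw; fun_prop
  refine (integrable_norm_iff hcont.aestronglyMeasurable).1 ?_
  simpa [tw] using g.integrable_pow_mul volume n

theorem hasDerivAt_CT {f f' : ℝ → ℂ} {C₀ C : ℝ} {k : ℕ} (g : 𝓢(ℝ, ℂ))
    (hf : ∀ x, HasDerivAt f (f' x) x) (hf'c : Continuous f')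
    (hfb : ∀ x, ‖f x‖ ≤ C₀) (hf'b : ∀ x, ‖f' x‖ ≤ C * (1 + |x|) ^ k) (ξ lam t : ℝ) :
    HasDerivAt (Tt f g ξ lam) (CT f' g t ξ lam) t := by
  have hfc : Continuous f := continuous_iff_continuousAt.2 fun x => (hf x).continuousAt
  have hC : 0 ≤ C := by simpa using (norm_nonneg _).trans (hf'b 0)
  unfold Tt
  simp only [CT_eq_integral_shift]
  refine (hasDerivAt_integral_of_dominated_loc_of_deriv_le (Metric.ball_mem_nhds t one_pos)
    (F' := fun s y => f' (y + s) * conj (g y) * chirp ξ lam y)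
    (bound := fun y => C * (2 + |t|) ^ k * ((1 + ‖y‖) ^ k * ‖g y‖))
    (Filter.Eventually.of_forall fun s =>
      (integrable_shift_mul_conj_mul_chirp hfc hfb g.integrable s ξ lam).aestronglyMeasurable)
    (integrable_shift_mul_conj_mul_chirp hfc hfb g.integrable t ξ lam) ?_ ?_
    ((g.integrable_one_add_norm_pow_mul volume k).const_mul _) ?_).2
  · exact (((hf'c.comp (continuous_add_const t)).mul
      (Complex.continuous_conj.comp g.continuous)).mul
      (continuous_chirp ξ lam)).aestronglyMeasurable
  · refine Filter.Eventually.of_forall fun y s hs => ?_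
    have hst : |s - t| < 1 := by simpa [Real.dist_eq] using Metric.mem_ball.1 hs
    have hs_le : 1 + |s| ≤ 2 + |t| := by linarith [abs_sub_abs_le_abs_sub s t]
    rw [norm_mul_conj_mul_chirp, Real.norm_eq_abs, ← mul_assoc, mul_assoc C, ← mul_pow]
    refine mul_le_mul_of_nonneg_right ?_ (norm_nonneg _)
    calc ‖f' (y + s)‖ ≤ C * (1 + |y + s|) ^ k := hf'b _
      _ ≤ C * ((2 + |t|) * (1 + |y|)) ^ k := by
        gcongr
        exact (one_add_abs_add_le y s).trans (by gcongr)
  · exact Filter.Eventually.of_forall fun y s _ =>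
      (((hf (y + s)).comp_const_add y s).mul_const _).mul_const _

theorem CT_sum_mul {f : ℝ → ℂ} {C₀ : ℝ} {N : ℕ} (hfc : Continuous f) (hfb : ∀ x, ‖f x‖ ≤ C₀)
    (g : 𝓢(ℝ, ℂ)) (c : Fin N → ℂ) (t ξ lam : ℝ) :
    CT (fun x => (∑ n, c n * ((x : ℂ) - t) ^ (n : ℕ)) * f x) g t ξ lam
      = ∑ n, c n * CT f (tw n g) t ξ lam := by
  simp only [CT_eq_integral_shift, ← integral_const_mul]
  rw [← integral_finsetSum _ fun (n : Fin N) _ =>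
    (integrable_shift_mul_conj_mul_chirp hfc hfb (integrable_tw g (n : ℕ)) t ξ lam).const_mul (c n)]
  congr 1
  funext y
  simp only [sum_mul]
  refine sum_congr rfl fun n _ => ?_
  simp only [tw, ofReal_add, add_sub_cancel_right, map_mul, map_pow, conj_ofReal]
  ring

lemma hasDerivAt_exp_cubic (θ₀ μ₀ ω₀ x : ℝ) :
    HasDerivAt (fun x : ℝ => exp (2 * π * I * ((θ₀ / 6 * x ^ 3 + μ₀ / 2 * x ^ 2 + ω₀ * x : ℝ) : ℂ)))
      (2 * π * I * ((θ₀ / 2 * x ^ 2 + μ₀ * x + ω₀ : ℝ) : ℂ) *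
        exp (2 * π * I * ((θ₀ / 6 * x ^ 3 + μ₀ / 2 * x ^ 2 + ω₀ * x : ℝ) : ℂ))) x := by
  have hphase : HasDerivAt (fun x : ℝ => θ₀ / 6 * x ^ 3 + μ₀ / 2 * x ^ 2 + ω₀ * x)
      (θ₀ / 2 * x ^ 2 + μ₀ * x + ω₀) x := by
    refine ((((hasDerivAt_pow 3 x).const_mul (θ₀ / 6)).add
      ((hasDerivAt_pow 2 x).const_mul (μ₀ / 2))).add
      ((hasDerivAt_id' x).const_mul ω₀)).congr_deriv ?_
    norm_num
    ring
  convert (hphase.ofReal_comp.const_mul (2 * π * I)).cexp using 1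
  ring

lemma norm_mul_quadratic_mul_le (z u : ℂ) (hu : ‖u‖ ≤ 1) (a b c x : ℝ) :
    ‖z * ((a * x ^ 2 + b * x + c : ℝ) : ℂ) * u‖ ≤ ‖z‖ * (|a| + |b| + |c|) * (1 + |x|) ^ 2 := by
  calc ‖z * ((a * x ^ 2 + b * x + c : ℝ) : ℂ) * u‖
      = ‖z‖ * |a * x ^ 2 + b * x + c| * ‖u‖ := by
        rw [norm_mul, norm_mul, norm_real, Real.norm_eq_abs]
    _ ≤ ‖z‖ * ((|a| + |b| + |c|) * (1 + |x|) ^ 2) * 1 := by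
        gcongr
        exact abs_quadratic_le a b c x
    _ = ‖z‖ * (|a| + |b| + |c|) * (1 + |x|) ^ 2 := by ring

end Chirplet

open Chirplet in
theorem chirplet_deriv_cubic_phase
    (g : SchwartzMap ℝ ℂ) (θ₀ μ₀ ω₀ : ℝ)
    (f : ℝ → ℂ)
    (hf : f = fun x =>
      Complex.exp (2 * (π : ℂ) * Complex.I *
        ((θ₀ / 6 * x ^ 3 + μ₀ / 2 * x ^ 2 + ω₀ * x : ℝ) : ℂ)))
    (t ξ lam : ℝ) :
    deriv (Tt f (⇑g) ξ lam) t =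
      2 * (π : ℂ) * Complex.I *
        (((θ₀ / 2 * t ^ 2 + μ₀ * t + ω₀ : ℝ) : ℂ) * CT f (⇑g) t ξ lam
          + ((θ₀ * t + μ₀ : ℝ) : ℂ) * CT f (tw 1 (⇑g)) t ξ lam
          + ((θ₀ : ℂ) / 2) * CT f (tw 2 (⇑g)) t ξ lam) := by
  have hderiv (x : ℝ) :
      HasDerivAt f (2 * π * I * ((θ₀ / 2 * x ^ 2 + μ₀ * x + ω₀ : ℝ) : ℂ) * f x) x := by
    subst hf
    exact hasDerivAt_exp_cubic θ₀ μ₀ ω₀ x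
  have hnorm (x : ℝ) : ‖f x‖ ≤ 1 := by simp [hf, norm_exp, -ofReal_pow]
  have hfc : Continuous f := by subst hf; fun_prop
  have htaylor : (fun x : ℝ => 2 * π * I * ((θ₀ / 2 * x ^ 2 + μ₀ * x + ω₀ : ℝ) : ℂ) * f x) =
      fun x : ℝ => (∑ n : Fin 3, ![2 * π * I * ((θ₀ / 2 * t ^ 2 + μ₀ * t + ω₀ : ℝ) : ℂ),
        2 * π * I * (θ₀ * t + μ₀), 2 * π * I * (θ₀ / 2)] n * ((x : ℂ) - t) ^ (n : ℕ)) * f x := by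
    funext x
    simp only [Fin.sum_univ_three, Matrix.cons_val, Fin.val_zero, Fin.val_one, Fin.val_two]
    push_cast
    ring
  rw [(hasDerivAt_CT g hderiv (by fun_prop) hnorm
      (fun x => norm_mul_quadratic_mul_le _ _ (hnorm x) _ _ _ x) ξ lam t).deriv,
    htaylor, CT_sum_mul hfc hnorm g]
  simp only [Fin.sum_univ_three, Matrix.cons_val, Fin.val_zero, Fin.val_one, Fin.val_two, tw_zero]
  push_cast
  ring
end
end
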